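/- arXiv:1201.4225 — 3 statements merged into one kernel-verified Lean document; each statement's English description precedes it below -/
import Mathlib

section
/- Let f be a PL homeomorphism of S^1 that preserves the Basilica lamination. Then every breakpoint of f is an arc endpoint if and only if there exists a finite subdivision of S^1 into standard intervals such that f is affine on each interval of the subdivision and maps each such interval onto a standard interval. -/
noncomputable section

open Set

/-- The circle `S¹ = ℝ/ℤ`. -/
abbrev Circle1 := AddCircle (1 : ℝ)

/-- `F` is affine on the closed interval `[u, v]`. -/
def AffineOn (F : ℝ → ℝ) (u v : ℝ) : Prop :=
  ∃ a b : ℝ, ∀ x ∈ Set.Icc u v, F x = a * x + b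

/-- `F : ℝ → ℝ` is a lift of a piecewise-linear homeomorphism of the circle:
continuous, strictly increasing, commutes with translation by 1, and affine on each
interval of some finite partition of `[0,1]`. -/
def IsPLLift (F : ℝ → ℝ) : Prop :=
  Continuous F ∧ StrictMono F ∧ (∀ x : ℝ, F (x + 1) = F x + 1) ∧
    ∃ (m : ℕ) (t : Fin (m + 1) → ℝ), t 0 = 0 ∧ t (Fin.last m) = 1 ∧ StrictMono t ∧
      ∀ i : Fin m, AffineOn F (t i.castSucc) (t i.succ)

/-- The lift `F : ℝ → ℝ` induces the circle map `f`. -/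
def InducedBy (f : Equiv.Perm Circle1) (F : ℝ → ℝ) : Prop :=
  ∀ x : ℝ, f (x : Circle1) = ((F x : ℝ) : Circle1)

/-- `f` is an (orientation-preserving) piecewise-linear homeomorphism of the circle. -/
def IsPLHomeo (f : Equiv.Perm Circle1) : Prop :=
  ∃ F : ℝ → ℝ, IsPLLift F ∧ InducedBy f F

/-- `F` has right slope `a` at `x`. -/
def HasRightSlope (F : ℝ → ℝ) (x a : ℝ) : Prop :=
  ∃ ε > (0 : ℝ), ∀ y ∈ Set.Icc x (x + ε), F y = F x + a * (y - x)

/-- `F` has left slope `a` at `x`. -/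
def HasLeftSlope (F : ℝ → ℝ) (x a : ℝ) : Prop :=
  ∃ ε > (0 : ℝ), ∀ y ∈ Set.Icc (x - ε) x, F y = F x + a * (y - x)

/-- `x` is a breakpoint of the lift `F`: the left and right slopes at `x` differ. -/
def LiftBreakpointAt (F : ℝ → ℝ) (x : ℝ) : Prop :=
  ∃ a b : ℝ, HasLeftSlope F x a ∧ HasRightSlope F x b ∧ a ≠ b

/-- `p ∈ S¹` is a breakpoint of the PL circle homeomorphism `f`. -/
def IsBreakpoint (f : Equiv.Perm Circle1) (p : Circle1) : Prop :=
  ∃ (F : ℝ → ℝ) (x : ℝ), IsPLLift F ∧ InducedBy f F ∧ (x : Circle1) = p ∧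
    LiftBreakpointAt F x

/-- `s` is a slope of one of the affine pieces of (a lift of) `f`. -/
def IsSlope (f : Equiv.Perm Circle1) (s : ℝ) : Prop :=
  ∃ (F : ℝ → ℝ) (x : ℝ), IsPLLift F ∧ InducedBy f F ∧ HasRightSlope F x s

/-- The unordered pair `{a, b}` is an arc of the Basilica lamination, i.e. equals
`{(3k-1)/(3·2ⁿ) mod 1, (3k+1)/(3·2ⁿ) mod 1}` for some `k ∈ ℤ`, `n ≥ 0`. -/
def IsArc (a b : Circle1) : Prop :=
  ∃ (k : ℤ) (n : ℕ),
    ({a, b} : Set Circle1) =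
      {(((3 * (k : ℝ) - 1) / (3 * 2 ^ n) : ℝ) : Circle1),
       (((3 * (k : ℝ) + 1) / (3 * 2 ^ n) : ℝ) : Circle1)}

/-- `p` is an endpoint of an arc of the Basilica lamination. -/
def IsArcEndpoint (p : Circle1) : Prop :=
  ∃ (k : ℤ) (n : ℕ),
    p = (((3 * (k : ℝ) - 1) / (3 * 2 ^ n) : ℝ) : Circle1) ∨
    p = (((3 * (k : ℝ) + 1) / (3 * 2 ^ n) : ℝ) : Circle1)

/-- `f` preserves the Basilica lamination. -/
def PreservesLamination (f : Equiv.Perm Circle1) : Prop :=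
  ∀ a b : Circle1, IsArc a b ↔ IsArc (f a) (f b)

/-- Membership in `T_B`: a PL homeomorphism of the circle that preserves the Basilica
lamination and all of whose breakpoints are arc endpoints. -/
def MemTB (f : Equiv.Perm Circle1) : Prop :=
  IsPLHomeo f ∧ PreservesLamination f ∧ ∀ p : Circle1, IsBreakpoint f p → IsArcEndpoint p

/-- `(u, v)` are the endpoints of a standard interval, i.e. the real interval `[u,v]` has
the form `[(3k+1)/(3·2ⁿ), (3k+2)/(3·2ⁿ)]` or `[(3k-1)/(3·2ⁿ⁺¹), (3k+1)/(3·2ⁿ⁺¹)]`. -/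
def IsStdPair (u v : ℝ) : Prop :=
  ∃ (k : ℤ) (n : ℕ),
    (u = (3 * (k : ℝ) + 1) / (3 * 2 ^ n) ∧ v = (3 * (k : ℝ) + 2) / (3 * 2 ^ n)) ∨
    (u = (3 * (k : ℝ) - 1) / (3 * 2 ^ (n + 1)) ∧
      v = (3 * (k : ℝ) + 1) / (3 * 2 ^ (n + 1)))

/-!
A lift `F` of a lamination-preserving PL homeomorphism is dyadic on each affine piece: a tiny
arc inside the piece is mapped onto an arc, which forces the slope to be `2ⁿ/2ⁿ'` and the
intercept to lie in `ℤ[1/2]`. If all breakpoints are arc endpoints, they are all of the form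
`L/(3·2^N)` with `3 ∤ L` for a single large `N`. Consecutive such points cut the line into
standard intervals of level `N`; none of them has a breakpoint in its interior, so `F` is affine
on each, and the dyadic map `x ↦ 2ⁿ/2ⁿ' · x + e/2ⁿ'` sends a standard interval of level `N ≥ n`
to one of level `N - n + n'`. Conversely, a lift that is affine on the intervals of a
subdivision can only break at subdivision points, and endpoints of standard intervals are arc
endpoints.
-/

theorem coe_eq_coe_iff_exists_int {x y : ℝ} : (x : Circle1) = y ↔ ∃ z : ℤ, x = y + z := by
  rw [← sub_eq_zero, ← AddCircle.coe_sub, AddCircle.coe_eq_zero_iff]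
  simp only [zsmul_eq_mul, mul_one]
  exact exists_congr fun z => by constructor <;> intro h <;> linarith

theorem map_add_int_of_map_add_one {F : ℝ → ℝ} (hP : ∀ x, F (x + 1) = F x + 1) (x : ℝ) (z : ℤ) :
    F (x + z) = F x + z := by
  have hper : Function.Periodic (fun y => F y - y) 1 := fun y => by simp only [hP]; ring
  have := hper.int_mul z x
  simp only [mul_one] at this
  linarith

theorem InducedBy.exists_int_eq_add {f : Equiv.Perm Circle1} {F G : ℝ → ℝ} (hF : Continuous F)
    (hG : Continuous G) (hFf : InducedBy f F) (hGf : InducedBy f G) :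
    ∃ c : ℤ, ∀ x, G x = F x + c := by
  have hint : ∀ x, G x - F x ∈ range ((↑) : ℤ → ℝ) := fun x => by
    obtain ⟨z, hz⟩ := coe_eq_coe_iff_exists_int.1 ((hGf x).symm.trans (hFf x))
    exact ⟨z, by linarith⟩
  obtain ⟨c, hc⟩ := hint 0
  refine ⟨c, fun x => ?_⟩
  have := isPreconnected_univ.constant_of_mapsTo
    Int.isClosedEmbedding_coe_real.isInducing.isDiscrete_range (hG.sub hF).continuousOn
    (fun y _ => hint y) (mem_univ x) (mem_univ 0)
  simp only [Pi.sub_apply] at this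
  linarith

section Slopes

variable {F : ℝ → ℝ} {x a b : ℝ}

theorem HasRightSlope.unique (ha : HasRightSlope F x a) (hb : HasRightSlope F x b) : a = b := by
  obtain ⟨ε, hε, hA⟩ := ha
  obtain ⟨δ, hδ, hB⟩ := hb
  have hm := lt_min hε hδ
  have h := (hA (x + min ε δ) ⟨by linarith, by linarith [min_le_left ε δ]⟩).symm.trans
    (hB (x + min ε δ) ⟨by linarith, by linarith [min_le_right ε δ]⟩)
  rw [add_sub_cancel_left] at h
  exact mul_right_cancel₀ hm.ne' (by linarith)

theorem HasLeftSlope.unique (ha : HasLeftSlope F x a) (hb : HasLeftSlope F x b) : a = b := by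
  obtain ⟨ε, hε, hA⟩ := ha
  obtain ⟨δ, hδ, hB⟩ := hb
  have hm := lt_min hε hδ
  have h := (hA (x - min ε δ) ⟨by linarith [min_le_left ε δ], by linarith⟩).symm.trans
    (hB (x - min ε δ) ⟨by linarith [min_le_right ε δ], by linarith⟩)
  rw [sub_sub_cancel_left] at h
  exact mul_right_cancel₀ (neg_ne_zero.2 hm.ne') (by linarith)

theorem LiftBreakpointAt.add_int (hP : ∀ x, F (x + 1) = F x + 1) (h : LiftBreakpointAt F x)
    (z : ℤ) : LiftBreakpointAt F (x + z) := by
  have hF : ∀ y, F y = F (y - z) + z := fun y => by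
    rw [← map_add_int_of_map_add_one hP, sub_add_cancel]
  obtain ⟨a, b, ⟨ε, hε, hl⟩, ⟨δ, hδ, hr⟩, hab⟩ := h
  refine ⟨a, b, ⟨ε, hε, fun y hy => ?_⟩, ⟨δ, hδ, fun y hy => ?_⟩, hab⟩
  · rw [hF y, hF (x + z), add_sub_cancel_right, hl (y - z) ⟨by linarith [hy.1], by linarith [hy.2]⟩]
    ring
  · rw [hF y, hF (x + z), add_sub_cancel_right, hr (y - z) ⟨by linarith [hy.1], by linarith [hy.2]⟩]
    ring

theorem LiftBreakpointAt.of_add_const {c : ℝ} (h : LiftBreakpointAt (fun y => F y + c) x) :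
    LiftBreakpointAt F x := by
  obtain ⟨a, b, ⟨ε, hε, hl⟩, ⟨δ, hδ, hr⟩, hab⟩ := h
  exact ⟨a, b, ⟨ε, hε, fun y hy => by linarith [hl y hy]⟩,
    ⟨δ, hδ, fun y hy => by linarith [hr y hy]⟩, hab⟩

variable {u v : ℝ}

theorem hasRightSlope_of_affine (h : ∀ y ∈ Icc u v, F y = a * y + b) (hx : x ∈ Ico u v) :
    HasRightSlope F x a :=
  ⟨v - x, by linarith [hx.2], fun y hy => by
    rw [h y ⟨by linarith [hx.1, hy.1], by linarith [hy.2]⟩, h x (Ico_subset_Icc_self hx)]; ring⟩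

theorem hasLeftSlope_of_affine (h : ∀ y ∈ Icc u v, F y = a * y + b) (hx : x ∈ Ioc u v) :
    HasLeftSlope F x a :=
  ⟨x - u, by linarith [hx.1], fun y hy => by
    rw [h y ⟨by linarith [hy.1], by linarith [hx.2, hy.2]⟩, h x (Ioc_subset_Icc_self hx)]; ring⟩

theorem HasRightSlope.of_hasLeftSlope {s : ℝ} (hr : HasRightSlope F x s)
    (hl : HasLeftSlope F x a) (hnb : ¬ LiftBreakpointAt F x) : HasRightSlope F x a := by
  obtain rfl : s = a := by
    by_contra hsa
    exact hnb ⟨a, s, hl, hr, Ne.symm hsa⟩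
  exact hr

theorem AffineOn.not_liftBreakpointAt (h : AffineOn F u v) (hx : x ∈ Ioo u v) :
    ¬ LiftBreakpointAt F x := by
  rintro ⟨a', b', hl, hr, hne⟩
  obtain ⟨a, b, hab⟩ := h
  exact hne ((hl.unique (hasLeftSlope_of_affine hab (Ioo_subset_Ioc_self hx))).trans
    (hr.unique (hasRightSlope_of_affine hab (Ioo_subset_Ico_self hx))).symm)

theorem eq_affine_of_forall_not_liftBreakpointAt (hF : Continuous F) {ε : ℝ} (huv : u ≤ v)
    (hε : 0 < ε) (hstart : ∀ y ∈ Icc u (u + ε), F y = a * y + b)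
    (hslope : ∀ x ∈ Ioo u v, ∃ s, HasRightSlope F x s)
    (hnb : ∀ x ∈ Ioo u v, ¬ LiftBreakpointAt F x) :
    ∀ y ∈ Icc u v, F y = a * y + b := by
  set S := {x | x ∈ Icc u v ∧ ∀ y ∈ Icc u x, F y = a * y + b}
  have huS : u ∈ S := ⟨⟨le_rfl, huv⟩, fun y hy => hstart y ⟨hy.1, by linarith [hy.2]⟩⟩
  have hbdd : BddAbove S := ⟨v, fun x hx => hx.1.2⟩
  set c := sSup S
  have huc : u ≤ c := le_csSup hbdd huS
  have hcv : c ≤ v := csSup_le ⟨u, huS⟩ fun x hx => hx.1.2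
  have hFc : F c = a * c + b := by
    have : closure S ⊆ {y | F y = a * y + b} :=
      closure_minimal (fun x hx => hx.2 x ⟨hx.1.1, le_rfl⟩) (isClosed_eq hF (by fun_prop))
    exact this (csSup_mem_closure ⟨u, huS⟩ hbdd)
  have hcS : ∀ y ∈ Icc u c, F y = a * y + b := fun y hy => by
    rcases hy.2.lt_or_eq with hyc | hyc
    · obtain ⟨x, hxS, hyx⟩ := exists_lt_of_lt_csSup ⟨u, huS⟩ hyc
      exact hxS.2 y ⟨hy.1, hyx.le⟩
    · rw [hyc, hFc]
  rcases hcv.eq_or_lt with hcv | hcv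
  · rwa [← hcv]
  -- if `c < v`, then `F` continues with slope `a` past `c`, contradicting `c = sSup S`
  have hright : HasRightSlope F c a := by
    rcases huc.eq_or_lt with huc | huc
    · rw [← huc]; exact hasRightSlope_of_affine hstart ⟨le_rfl, by linarith⟩
    · obtain ⟨s, hs⟩ := hslope c ⟨huc, hcv⟩
      exact hs.of_hasLeftSlope (hasLeftSlope_of_affine hcS ⟨huc, le_rfl⟩) (hnb c ⟨huc, hcv⟩)
  obtain ⟨δ, hδ, hr⟩ := hright
  have hmS : min (c + δ) v ∈ S := by
    refine ⟨⟨huc.trans (le_min (by linarith) hcv.le), min_le_right _ _⟩, fun y hy => ?_⟩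
    rcases le_or_gt y c with hyc | hyc
    · exact hcS y ⟨hy.1, hyc⟩
    · rw [hr y ⟨hyc.le, hy.2.trans (min_le_left _ _)⟩, hFc]; ring
  linarith [le_csSup hbdd hmS, lt_min (by linarith : c < c + δ) hcv]

end Slopes

theorem exists_mem_Ico_castSucc_succ {α : Type*} [LinearOrder α] {m : ℕ} {t : Fin (m + 1) → α}
    {x : α}
    (hx : x ∈ Ico (t 0) (t (Fin.last m))) : ∃ i : Fin m, x ∈ Ico (t i.castSucc) (t i.succ) := by
  classical
  set J := Finset.univ.filter fun j => t j ≤ x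
  have hJ : J.Nonempty := ⟨0, by simp [J, hx.1]⟩
  have hj : t (J.max' hJ) ≤ x := (Finset.mem_filter.1 (J.max'_mem hJ)).2
  obtain ⟨i, hi⟩ := Fin.exists_castSucc_eq.2 fun h => hx.2.not_ge (h ▸ hj)
  refine ⟨i, hi ▸ hj, lt_of_not_ge fun h => ?_⟩
  exact (J.le_max' i.succ (by simp [J, h])).not_gt (hi ▸ Fin.castSucc_lt_succ)

theorem exists_sub_int_mem_Ico {m : ℕ} {t : Fin (m + 1) → ℝ} (hlast : t (Fin.last m) = t 0 + 1)
    (x : ℝ) : ∃ (i : Fin m) (z : ℤ), x - z ∈ Ico (t i.castSucc) (t i.succ) := by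
  obtain ⟨i, hi⟩ := exists_mem_Ico_castSucc_succ (x := x - ⌊x - t 0⌋)
    ⟨by linarith [Int.floor_le (x - t 0)], by linarith [Int.lt_floor_add_one (x - t 0)]⟩
  exact ⟨i, _, hi⟩

theorem exists_eq_add_int_of_liftBreakpointAt {F : ℝ → ℝ} (hP : ∀ x, F (x + 1) = F x + 1)
    {m : ℕ} {t : Fin (m + 1) → ℝ} (hlast : t (Fin.last m) = t 0 + 1)
    (haff : ∀ i : Fin m, AffineOn F (t i.castSucc) (t i.succ)) {x : ℝ}
    (hx : LiftBreakpointAt F x) : ∃ (i : Fin m) (z : ℤ), x = t i.castSucc + z := by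
  obtain ⟨i, z, hi⟩ := exists_sub_int_mem_Ico hlast x
  refine ⟨i, z, ?_⟩
  rcases hi.1.eq_or_lt with h | h
  · linarith
  · refine absurd (hx.add_int hP (-z)) ((haff i).not_liftBreakpointAt ?_)
    push_cast
    exact ⟨h, hi.2⟩

def dyadicAffine (n n' : ℕ) (e : ℤ) (x : ℝ) : ℝ := 2 ^ n / 2 ^ n' * x + e / 2 ^ n'

/-- Only the exponent `n` is recorded: a standard interval of level `N ≥ n` is mapped by
`dyadicAffine n n' e` to one of level `N - n + n'`, whatever `n'` and `e` are. -/
def IsDyadicAffineOn (F : ℝ → ℝ) (n : ℕ) (s : Set ℝ) : Prop :=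
  ∃ (n' : ℕ) (e : ℤ), EqOn F (dyadicAffine n n' e) s

theorem IsDyadicAffineOn.mono {F : ℝ → ℝ} {n : ℕ} {s s' : Set ℝ} (h : IsDyadicAffineOn F n s)
    (hs : s' ⊆ s) : IsDyadicAffineOn F n s' :=
  let ⟨n', e, he⟩ := h
  ⟨n', e, he.mono hs⟩

theorem IsDyadicAffineOn.Icc_add_int {F : ℝ → ℝ} (hP : ∀ x, F (x + 1) = F x + 1) {n : ℕ}
    {u v : ℝ} (h : IsDyadicAffineOn F n (Icc u v)) (z : ℤ) :
    IsDyadicAffineOn F n (Icc (u + z) (v + z)) := by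
  obtain ⟨n', e, he⟩ := h
  refine ⟨n', e - 2 ^ n * z + 2 ^ n' * z, fun y hy => ?_⟩
  have hyz : y - z ∈ Icc u v := ⟨by linarith [hy.1], by linarith [hy.2]⟩
  rw [← sub_add_cancel y (z : ℝ), map_add_int_of_map_add_one hP, he hyz]
  simp only [dyadicAffine]
  push_cast
  field_simp
  ring

theorem exists_isDyadicAffineOn_germ {F : ℝ → ℝ} (hP : ∀ x, F (x + 1) = F x + 1) {m : ℕ}
    {t : Fin (m + 1) → ℝ} (hlast : t (Fin.last m) = t 0 + 1) {n : Fin m → ℕ}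
    (hn : ∀ i, IsDyadicAffineOn F (n i) (Icc (t i.castSucc) (t i.succ))) (x : ℝ) :
    ∃ i, ∃ ε > 0, IsDyadicAffineOn F (n i) (Icc x (x + ε)) := by
  obtain ⟨i, z, hi⟩ := exists_sub_int_mem_Ico hlast x
  refine ⟨i, t i.succ + z - x, by linarith [hi.2], ((hn i).Icc_add_int hP z).mono ?_⟩
  exact Icc_subset_Icc (by linarith [hi.1]) (by linarith)

theorem exists_arc_mem_Ioo {u v : ℝ} (huv : u < v) (C : ℝ) :
    ∃ (k : ℤ) (n : ℕ), C < 2 ^ n ∧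
      u < (3 * k - 1) / (3 * 2 ^ n) ∧ (3 * k + 1) / (3 * 2 ^ n) < v := by
  obtain ⟨n, hn⟩ := pow_unbounded_of_one_lt (max C (5 / (3 * (v - u)))) (one_lt_two (α := ℝ))
  have hD : 5 < 3 * 2 ^ n * (v - u) := by
    have := (div_lt_iff₀ (by linarith : (0 : ℝ) < 3 * (v - u))).1 (le_max_right _ _ |>.trans_lt hn)
    linarith
  set k := ⌊(3 * 2 ^ n * u + 1) / 3⌋ + 1
  have hk₁ := Int.lt_floor_add_one ((3 * 2 ^ n * u + 1) / 3)
  have hk₂ := Int.floor_le ((3 * 2 ^ n * u + 1) / 3)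
  have hpos : (0 : ℝ) < 3 * 2 ^ n := by positivity
  refine ⟨k, n, (le_max_left _ _).trans_lt hn, (lt_div_iff₀ hpos).2 ?_, (div_lt_iff₀ hpos).2 ?_⟩
  · push_cast [k]; linarith
  · push_cast [k]; linarith

theorem exists_eq_of_isArc {x y : ℝ} (hxy : x < y) (hyx : y - x < 1 / 3) (h : IsArc x y) :
    ∃ (k : ℤ) (n : ℕ), x = (3 * k - 1) / (3 * 2 ^ n) ∧ y = (3 * k + 1) / (3 * 2 ^ n) := by
  obtain ⟨k, n, hkn⟩ := h
  have hlen : (3 * k + 1) / (3 * 2 ^ n) - (3 * k - 1) / (3 * 2 ^ n) = 2 / (3 * 2 ^ n : ℝ) := by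
    field_simp; ring
  have hlen₀ : 0 < 2 / (3 * 2 ^ n : ℝ) := by positivity
  have hlen₁ : 2 / (3 * 2 ^ n : ℝ) ≤ 2 / 3 :=
    div_le_div_of_nonneg_left (by norm_num) (by norm_num)
      (by linarith [one_le_pow₀ (M₀ := ℝ) one_le_two (n := n)])
  -- `y - x` and the arc length both lie in `(0, 2/3]`, so the lifts of the two ends differ by
  -- the same integer, and `x` cannot lift the larger end
  rcases Set.pair_eq_pair_iff.1 hkn with ⟨hx, hy⟩ | ⟨hx, hy⟩ <;>
    obtain ⟨z, hz⟩ := coe_eq_coe_iff_exists_int.1 hx <;>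
    obtain ⟨w, hw⟩ := coe_eq_coe_iff_exists_int.1 hy
  · obtain rfl : w = z := by
      have h₁ : (w : ℝ) - z < 1 := by linarith
      have h₂ : -1 < (w : ℝ) - z := by linarith
      have : w - z < 1 := by exact_mod_cast h₁
      have : -1 < w - z := by exact_mod_cast h₂
      omega
    refine ⟨k + 2 ^ n * w, n, ?_, ?_⟩
    · rw [hz]; push_cast; field_simp; ring
    · rw [hw]; push_cast; field_simp; ring
  · have h₁ : (w : ℝ) - z < 1 := by linarith
    have h₂ : 0 < (w : ℝ) - z := by linarith
    have : w - z < 1 := by exact_mod_cast h₁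
    have : 0 < w - z := by exact_mod_cast h₂
    omega

theorem AffineOn.exists_isDyadicAffineOn {f : Equiv.Perm Circle1} {F : ℝ → ℝ}
    (hlam : PreservesLamination f) (hind : InducedBy f F) (hmono : StrictMono F) {u v : ℝ}
    (huv : u < v) (haff : AffineOn F u v) : ∃ n, IsDyadicAffineOn F n (Icc u v) := by
  obtain ⟨a, b, hab⟩ := haff
  have ha : 0 < a := by
    have := hmono huv
    rw [hab u ⟨le_rfl, huv.le⟩, hab v ⟨huv.le, le_rfl⟩] at this
    nlinarith
  obtain ⟨k, n, hn, hp, hq⟩ := exists_arc_mem_Ioo huv (2 * a)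
  have hpq : (3 * k + 1) / (3 * 2 ^ n) - (3 * k - 1) / (3 * 2 ^ n) = 2 / (3 * 2 ^ n : ℝ) := by
    field_simp; ring
  have hpq₀ : (0 : ℝ) < 2 / (3 * 2 ^ n) := by positivity
  have hFp := hab _ ⟨hp.le, by linarith⟩
  have hFq := hab _ ⟨by linarith, hq.le⟩
  have harc : IsArc (F ((3 * k - 1) / (3 * 2 ^ n))) (F ((3 * k + 1) / (3 * 2 ^ n))) := by
    rw [← hind, ← hind]
    exact (hlam _ _).1 ⟨k, n, rfl⟩
  have hlen : F ((3 * k + 1) / (3 * 2 ^ n)) - F ((3 * k - 1) / (3 * 2 ^ n)) =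
      a * (2 / (3 * 2 ^ n)) := by
    rw [hFp, hFq, ← hpq]; ring
  have hlen₀ : 0 < a * (2 / (3 * 2 ^ n)) := mul_pos ha hpq₀
  have hlen₁ : a * (2 / (3 * 2 ^ n)) < 1 / 3 := by
    rw [mul_div_assoc', div_lt_div_iff₀ (by positivity) (by norm_num)]
    linarith
  obtain ⟨k', n', hp', hq'⟩ := exists_eq_of_isArc (by linarith) (by linarith) harc
  have ha' : a = 2 ^ n / 2 ^ n' := by
    rw [hFp] at hp'
    rw [hFq] at hq'
    field_simp at hp' hq' ⊢
    nlinarith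
  refine ⟨n, n', k' - k, fun x hx => ?_⟩
  rw [hFp, ha'] at hp'
  rw [hab x hx, dyadicAffine, ha', show b = (k' - k) / 2 ^ n' by field_simp at hp' ⊢; linarith]
  push_cast
  ring

/-- The lifts of arc endpoints whose denominator divides `3·2^N`. -/
def IsLevelEndpoint (N : ℕ) (x : ℝ) : Prop :=
  ∃ L : ℤ, ¬ 3 ∣ L ∧ x = L / (3 * 2 ^ N)

theorem IsLevelEndpoint.mono {n N : ℕ} {x : ℝ} (h : IsLevelEndpoint n x) (hnN : n ≤ N) :
    IsLevelEndpoint N x := by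
  obtain ⟨L, hL, rfl⟩ := h
  obtain ⟨d, rfl⟩ := Nat.exists_eq_add_of_le hnN
  refine ⟨L * 2 ^ d, fun h3 => ?_, ?_⟩
  · rcases Int.prime_three.dvd_mul.1 h3 with h3 | h3
    · exact hL h3
    · exact absurd (Int.prime_three.dvd_of_dvd_pow h3) (by norm_num)
  · push_cast
    rw [pow_add]
    field_simp

theorem IsLevelEndpoint.add_int {N : ℕ} {x : ℝ} (h : IsLevelEndpoint N x) (z : ℤ) :
    IsLevelEndpoint N (x + z) := by
  obtain ⟨L, hL, rfl⟩ := h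
  refine ⟨L + 3 * (2 ^ N * z), (dvd_add_left (dvd_mul_right 3 _)).not.2 hL, ?_⟩
  push_cast
  field_simp

theorem exists_isLevelEndpoint_of_isArcEndpoint {x : ℝ} (h : IsArcEndpoint x) :
    ∃ N, IsLevelEndpoint N x := by
  obtain ⟨k, n, h | h⟩ := h <;> obtain ⟨z, hz⟩ := coe_eq_coe_iff_exists_int.1 h <;>
    refine ⟨n, hz ▸ IsLevelEndpoint.add_int ?_ z⟩
  · exact ⟨3 * k - 1, by omega, by push_cast; rfl⟩
  · exact ⟨3 * k + 1, by omega, by push_cast; rfl⟩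

theorem IsStdPair.isArcEndpoint {u v : ℝ} (h : IsStdPair u v) : IsArcEndpoint u := by
  obtain ⟨k, n, ⟨rfl, -⟩ | ⟨rfl, -⟩⟩ := h
  · exact ⟨k, n, Or.inr rfl⟩
  · exact ⟨k, n + 1, Or.inl rfl⟩

/-- Standard intervals with denominator `3·2^N`; those of the second kind in `IsStdPair` have
`N = n + 1`. -/
def IsStdPairAtLevel (N : ℕ) (u v : ℝ) : Prop :=
  ∃ k : ℤ, (u = (3 * k + 1) / (3 * 2 ^ N) ∧ v = (3 * k + 2) / (3 * 2 ^ N)) ∨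
    (u = (3 * k - 1) / (3 * 2 ^ N) ∧ v = (3 * k + 1) / (3 * 2 ^ N))

section StdPairAtLevel

variable {N : ℕ} {u v : ℝ}

theorem IsStdPairAtLevel.isStdPair (h : IsStdPairAtLevel N u v) (hN : 1 ≤ N) :
    IsStdPair u v := by
  obtain ⟨k, h | h⟩ := h
  · exact ⟨k, N, Or.inl h⟩
  · exact ⟨k, N - 1, Or.inr (Nat.sub_add_cancel hN ▸ h)⟩

theorem IsStdPairAtLevel.lt (h : IsStdPairAtLevel N u v) : u < v := by
  obtain ⟨k, ⟨rfl, rfl⟩ | ⟨rfl, rfl⟩⟩ := h <;> gcongr <;> linarith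

theorem IsStdPairAtLevel.not_isLevelEndpoint (h : IsStdPairAtLevel N u v) {x : ℝ}
    (hx : x ∈ Ioo u v) : ¬ IsLevelEndpoint N x := by
  rintro ⟨L, hL, rfl⟩
  have hpos : (0 : ℝ) < 3 * 2 ^ N := by positivity
  obtain ⟨k, ⟨rfl, rfl⟩ | ⟨rfl, rfl⟩⟩ := h <;>
  · obtain ⟨h₁, h₂⟩ := hx
    rw [div_lt_div_iff_of_pos_right hpos] at h₁ h₂
    norm_cast at h₁ h₂
    omega

theorem dyadicAffine_div {n N : ℕ} (hn : n ≤ N) (n' : ℕ) (e k : ℤ) (δ : ℝ) :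
    dyadicAffine n n' e ((3 * k + δ) / (3 * 2 ^ N)) =
      (3 * ((k + e * 2 ^ (N - n) : ℤ) : ℝ) + δ) / (3 * 2 ^ (N - n + n')) := by
  rw [dyadicAffine, ← Nat.sub_add_cancel hn, pow_add, Nat.add_sub_cancel, pow_add]
  push_cast
  field_simp
  ring

theorem IsStdPairAtLevel.map_dyadicAffine (h : IsStdPairAtLevel N u v) {n : ℕ} (hn : n ≤ N)
    (n' : ℕ) (e : ℤ) :
    IsStdPairAtLevel (N - n + n') (dyadicAffine n n' e u) (dyadicAffine n n' e v) := by
  obtain ⟨k, ⟨rfl, rfl⟩ | ⟨rfl, rfl⟩⟩ := h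
  · exact ⟨_, Or.inl ⟨dyadicAffine_div hn n' e k 1, dyadicAffine_div hn n' e k 2⟩⟩
  · refine ⟨_, Or.inr ⟨?_, dyadicAffine_div hn n' e k 1⟩⟩
    simpa only [← sub_eq_add_neg] using dyadicAffine_div hn n' e k (-1)

end StdPairAtLevel

/-- `1, 2, 4, 5, 7, 8, …`: the positive integers prime to `3`. -/
def gridNumerator (i : ℕ) : ℕ := i + i / 2 + 1

theorem isStdPairAtLevel_gridNumerator (N i : ℕ) :
    IsStdPairAtLevel N (gridNumerator i / (3 * 2 ^ N)) (gridNumerator (i + 1) / (3 * 2 ^ N)) := by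
  obtain ⟨l, rfl | rfl⟩ := Nat.even_or_odd' i
  · have h₁ : gridNumerator (2 * l) = 3 * l + 1 := by simp only [gridNumerator]; omega
    have h₂ : gridNumerator (2 * l + 1) = 3 * l + 2 := by simp only [gridNumerator]; omega
    exact ⟨l, Or.inl ⟨by rw [h₁]; push_cast; ring, by rw [h₂]; push_cast; ring⟩⟩
  · have h₁ : gridNumerator (2 * l + 1) = 3 * l + 2 := by simp only [gridNumerator]; omega
    have h₂ : gridNumerator (2 * l + 1 + 1) = 3 * l + 4 := by simp only [gridNumerator]; omega
    exact ⟨l + 1, Or.inr ⟨by rw [h₁]; push_cast; ring, by rw [h₂]; push_cast; ring⟩⟩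

theorem exists_subdivision_isStdPairAtLevel (N : ℕ) :
    ∃ (m : ℕ) (t : Fin (m + 1) → ℝ), StrictMono t ∧ t (Fin.last m) = t 0 + 1 ∧
      ∀ i : Fin m, IsStdPairAtLevel N (t i.castSucc) (t i.succ) := by
  have hpos : (0 : ℝ) < 3 * 2 ^ N := by positivity
  refine ⟨2 * 2 ^ N, fun i => gridNumerator i / (3 * 2 ^ N), fun i j hij => ?_, ?_,
    fun i => isStdPairAtLevel_gridNumerator N i⟩
  · have : gridNumerator i < gridNumerator j := by
      simp only [gridNumerator]; have : (i : ℕ) < j := hij; omega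
    dsimp only
    gcongr
  · have : gridNumerator (2 * 2 ^ N) = gridNumerator 0 + 3 * 2 ^ N := by
      simp only [gridNumerator]; omega
    simp only [Fin.val_last, Fin.val_zero, this]
    push_cast
    field_simp

theorem IsStdPairAtLevel.isStdPair_image {F : ℝ → ℝ} {N : ℕ} (hF : Continuous F)
    (hgerm : ∀ x, ∃ n < N, ∃ ε > 0, IsDyadicAffineOn F n (Icc x (x + ε)))
    (hbreak : ∀ x, LiftBreakpointAt F x → IsLevelEndpoint N x) {u v : ℝ}
    (h : IsStdPairAtLevel N u v) :
    IsStdPair u v ∧ AffineOn F u v ∧ IsStdPair (F u) (F v) := by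
  obtain ⟨n, hn, ε, hε, n', e, he⟩ := hgerm u
  have hslope : ∀ x, ∃ s, HasRightSlope F x s := fun x => by
    obtain ⟨_, _, δ, hδ, _, _, hxδ⟩ := hgerm x
    exact ⟨_, hasRightSlope_of_affine (v := x + δ) (fun y hy => hxδ hy) ⟨le_rfl, by linarith⟩⟩
  have haff : ∀ y ∈ Icc u v, F y = dyadicAffine n n' e y :=
    eq_affine_of_forall_not_liftBreakpointAt hF h.lt.le hε (fun y hy => he hy)
      (fun x _ => hslope x) fun x hx hb => h.not_isLevelEndpoint hx (hbreak x hb)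
  have himage := h.map_dyadicAffine hn.le n' e
  rw [← haff u (left_mem_Icc.2 h.lt.le), ← haff v (right_mem_Icc.2 h.lt.le)] at himage
  exact ⟨h.isStdPair (by omega), ⟨_, _, haff⟩, himage.isStdPair (by omega)⟩

theorem exists_level_of_liftBreakpointAt {F : ℝ → ℝ} (hP : ∀ x, F (x + 1) = F x + 1) {m : ℕ}
    {t : Fin (m + 1) → ℝ} (hlast : t (Fin.last m) = t 0 + 1)
    (haff : ∀ i : Fin m, AffineOn F (t i.castSucc) (t i.succ))
    (hbp : ∀ x, LiftBreakpointAt F x → ∃ N, IsLevelEndpoint N x) :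
    ∃ N, ∀ x, LiftBreakpointAt F x → IsLevelEndpoint N x := by
  have hν : ∀ i : Fin m, ∃ ν, LiftBreakpointAt F (t i.castSucc) →
      IsLevelEndpoint ν (t i.castSucc) := fun i =>
    (em _).elim (fun h => (hbp _ h).imp fun _ hν _ => hν) fun h => ⟨0, fun h' => absurd h' h⟩
  choose ν hν using hν
  obtain ⟨N, hN⟩ := Finite.exists_le ν
  refine ⟨N, fun x hx => ?_⟩
  obtain ⟨i, z, rfl⟩ := exists_eq_add_int_of_liftBreakpointAt hP hlast haff hx
  have hi : LiftBreakpointAt F (t i.castSucc) := by simpa using hx.add_int hP (-z)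
  exact ((hν i hi).mono (hN i)).add_int z

def HasStandardSubdivision (f : Equiv.Perm Circle1) : Prop :=
  ∃ F : ℝ → ℝ, IsPLLift F ∧ InducedBy f F ∧
    ∃ (m : ℕ) (t : Fin (m + 1) → ℝ), StrictMono t ∧ t (Fin.last m) = t 0 + 1 ∧
      ∀ i : Fin m,
        IsStdPair (t i.castSucc) (t i.succ) ∧
        AffineOn F (t i.castSucc) (t i.succ) ∧
        IsStdPair (F (t i.castSucc)) (F (t i.succ))

theorem hasStandardSubdivision_of_isArcEndpoint {f : Equiv.Perm Circle1} (hf : IsPLHomeo f)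
    (hlam : PreservesLamination f) (hbp : ∀ p, IsBreakpoint f p → IsArcEndpoint p) :
    HasStandardSubdivision f := by
  obtain ⟨F, hlift, hind⟩ := hf
  obtain ⟨hFc, hFm, hP, m, t, ht0, ht1, ht, haff⟩ := id hlift
  have hlast : t (Fin.last m) = t 0 + 1 := by rw [ht0, ht1, zero_add]
  choose n hn using fun i : Fin m =>
    (haff i).exists_isDyadicAffineOn hlam hind hFm (ht Fin.castSucc_lt_succ)
  obtain ⟨N₀, hN₀⟩ := exists_level_of_liftBreakpointAt hP hlast haff fun x hx =>
    exists_isLevelEndpoint_of_isArcEndpoint (hbp x ⟨F, x, hlift, hind, rfl, hx⟩)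
  obtain ⟨n₀, hn₀⟩ := Finite.exists_le n
  set N := max N₀ (n₀ + 1)
  have hgerm : ∀ x, ∃ k < N, ∃ ε > 0, IsDyadicAffineOn F k (Icc x (x + ε)) := fun x => by
    obtain ⟨i, hi⟩ := exists_isDyadicAffineOn_germ hP hlast hn x
    exact ⟨n i, by have := hn₀ i; omega, hi⟩
  obtain ⟨m', t', ht', hlast', hstd⟩ := exists_subdivision_isStdPairAtLevel N
  exact ⟨F, hlift, hind, m', t', ht', hlast', fun i => (hstd i).isStdPair_image hFc hgerm
    fun x hx => (hN₀ x hx).mono (le_max_left _ _)⟩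

theorem isArcEndpoint_of_hasStandardSubdivision {f : Equiv.Perm Circle1}
    (h : HasStandardSubdivision f) (p : Circle1) (hp : IsBreakpoint f p) : IsArcEndpoint p := by
  obtain ⟨F, hF, hind, m, t, -, hlast, hstd⟩ := h
  obtain ⟨G, x, hG, hGind, rfl, hx⟩ := hp
  obtain ⟨c, hc⟩ := hind.exists_int_eq_add hF.1 hG.1 hGind
  rw [show G = fun y => F y + c from funext hc] at hx
  obtain ⟨i, z, rfl⟩ :=
    exists_eq_add_int_of_liftBreakpointAt hF.2.2.1 hlast (fun i => (hstd i).2.1) hx.of_add_const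
  rw [coe_eq_coe_iff_exists_int.2 ⟨z, rfl⟩]
  exact (hstd i).1.isArcEndpoint

/-- For a PL homeomorphism `f` of the circle preserving the Basilica lamination: every
breakpoint of `f` is an arc endpoint iff there is a finite subdivision of the circle into
standard intervals such that `f` is affine on each of them and maps each onto a standard
interval. -/
theorem breakpoints_arcEndpoints_iff_standard_subdivision
    (f : Equiv.Perm Circle1) (hf : IsPLHomeo f) (hlam : PreservesLamination f) :
    (∀ p : Circle1, IsBreakpoint f p → IsArcEndpoint p) ↔
      ∃ F : ℝ → ℝ, IsPLLift F ∧ InducedBy f F ∧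
        ∃ (m : ℕ) (t : Fin (m + 1) → ℝ), StrictMono t ∧ t (Fin.last m) = t 0 + 1 ∧
          ∀ i : Fin m,
            IsStdPair (t i.castSucc) (t i.succ) ∧
            AffineOn F (t i.castSucc) (t i.succ) ∧
            IsStdPair (F (t i.castSucc)) (F (t i.succ)) :=
  ⟨hasStandardSubdivision_of_isArcEndpoint hf hlam, isArcEndpoint_of_hasStandardSubdivision⟩
end
end

section
/- Every element f of T_B is given on each of its intervals of linearity by a map of the form θ ↦ 2^j·θ + d (mod 1) for some integer j and some dyadic rational d (a rational of the form m/2^p with m, p ∈ ℤ). -/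
/-!
Take an arc of the lamination at a scale `n` so fine that it lies in the interval of linearity and
its image has lifted length `a · 2 / (3 · 2ⁿ) < 1 / 3`, where `a` is the slope. Since `f` preserves
the lamination, the image is an arc at some scale `m`, and the length bound forces its lift to be
`[(3k' - 1) / (3 · 2ᵐ), (3k' + 1) / (3 · 2ᵐ)]` up to an integer translation. Comparing lengths gives
`a = 2ⁿ⁻ᵐ`, and comparing left endpoints then shows that the offset is dyadic with denominator `2ᵐ`.
-/

noncomputable section

open Set

namespace Basilica

def arcLeft (k : ℤ) (n : ℕ) : ℝ := (3 * k - 1) / (3 * 2 ^ n)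

def arcRight (k : ℤ) (n : ℕ) : ℝ := (3 * k + 1) / (3 * 2 ^ n)

lemma arcRight_sub_arcLeft (k : ℤ) (n : ℕ) : arcRight k n - arcLeft k n = 2 / (3 * 2 ^ n) := by
  unfold arcLeft arcRight
  ring

lemma isArc_arcLeft_arcRight (k : ℤ) (n : ℕ) : IsArc (arcLeft k n) (arcRight k n) :=
  ⟨k, n, rfl⟩

lemma circle_coe_eq_coe_iff {x y : ℝ} : (x : Circle1) = y ↔ ∃ L : ℤ, x = y + L := by
  rw [← sub_eq_zero, ← AddCircle.coe_sub, AddCircle.coe_eq_zero_iff]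
  constructor
  · rintro ⟨L, hL⟩
    exact ⟨L, by simp only [zsmul_eq_mul, mul_one] at hL; linarith⟩
  · rintro ⟨L, rfl⟩
    exact ⟨L, by simp⟩

lemma IsArc.exists_lift {x y : ℝ} (h : IsArc x y) (hxy : x < y) (hyx : y < x + 1 / 3) :
    ∃ (k : ℤ) (m : ℕ) (L : ℤ), x = arcLeft k m + L ∧ y = arcRight k m + L := by
  obtain ⟨k, m, hset⟩ := h
  have hwidth := arcRight_sub_arcLeft k m
  have hwidth_pos : 0 < 2 / (3 * (2 : ℝ) ^ m) := by positivity
  have hwidth_le : 2 / (3 * (2 : ℝ) ^ m) ≤ 2 / 3 :=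
    div_le_div_of_nonneg_left (by norm_num) (by norm_num)
      (by linarith [one_le_pow₀ (M₀ := ℝ) (n := m) one_le_two])
  rcases pair_eq_pair_iff.mp hset with ⟨hx, hy⟩ | ⟨hx, hy⟩
  · obtain ⟨L₁, hL₁⟩ := circle_coe_eq_coe_iff.mp hx
    obtain ⟨L₂, hL₂⟩ := circle_coe_eq_coe_iff.mp hy
    change x = arcLeft k m + L₁ at hL₁
    change y = arcRight k m + L₂ at hL₂
    have : -1 < L₂ - L₁ := by
      exact_mod_cast (show (-1 : ℝ) < ((L₂ - L₁ : ℤ) : ℝ) by push_cast; linarith)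
    have : L₂ - L₁ < 1 := by
      exact_mod_cast (show ((L₂ - L₁ : ℤ) : ℝ) < 1 by push_cast; linarith)
    obtain rfl : L₂ = L₁ := by omega
    exact ⟨k, m, L₂, hL₁, hL₂⟩
  · obtain ⟨L₁, hL₁⟩ := circle_coe_eq_coe_iff.mp hx
    obtain ⟨L₂, hL₂⟩ := circle_coe_eq_coe_iff.mp hy
    change x = arcRight k m + L₁ at hL₁
    change y = arcLeft k m + L₂ at hL₂
    -- a reversed lift would have length `1 - 2 / (3 * 2 ^ m) ≥ 1 / 3`
    have : 0 < L₂ - L₁ := by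
      exact_mod_cast (show (0 : ℝ) < ((L₂ - L₁ : ℤ) : ℝ) by push_cast; linarith)
    have : L₂ - L₁ < 1 := by
      exact_mod_cast (show ((L₂ - L₁ : ℤ) : ℝ) < 1 by push_cast; linarith)
    omega

lemma exists_arc_subset_Icc {u v : ℝ} (huv : u < v) (C : ℝ) :
    ∃ (n : ℕ) (k : ℤ), C ≤ 2 ^ n ∧ u ≤ arcLeft k n ∧ arcRight k n ≤ v := by
  obtain ⟨n, hn⟩ := ((tendsto_pow_atTop_atTop_of_one_lt one_lt_two).eventually_ge_atTop
    (max C (2 / (v - u)))).exists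
  have hs : (0 : ℝ) < 3 * 2 ^ n := by positivity
  have hlen : 2 ≤ 2 ^ n * (v - u) := (div_le_iff₀ (sub_pos.mpr huv)).mp (le_of_max_le_right hn)
  refine ⟨n, ⌈(3 * 2 ^ n * u + 1) / 3⌉, le_of_max_le_left hn, ?_, ?_⟩
  · rw [arcLeft, le_div_iff₀ hs]
    linarith [Int.le_ceil ((3 * 2 ^ n * u + 1) / 3)]
  · rw [arcRight, div_le_iff₀ hs]
    linarith [Int.ceil_lt_add_one ((3 * 2 ^ n * u + 1) / 3)]

lemma affine_eq_of_mapsTo_arc {a b : ℝ} {k k' L : ℤ} {n m : ℕ}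
    (hl : a * arcLeft k n + b = arcLeft k' m + L) (hr : a * arcRight k n + b = arcRight k' m + L) :
    a = 2 ^ ((n : ℤ) - m) ∧ b = ((k' - k + L * 2 ^ m : ℤ) : ℝ) / 2 ^ (m : ℤ) := by
  have hslope : a * (2 / (3 * 2 ^ n)) = 2 / (3 * 2 ^ m) := by
    rw [← arcRight_sub_arcLeft, ← arcRight_sub_arcLeft]
    linear_combination hr - hl
  have ha : a = 2 ^ n / 2 ^ m := by
    field_simp at hslope ⊢
    linarith
  refine ⟨by rw [ha, zpow_sub₀ two_ne_zero, zpow_natCast, zpow_natCast], ?_⟩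
  rw [ha] at hl
  unfold arcLeft at hl
  rw [zpow_natCast]
  push_cast
  field_simp at hl ⊢
  linear_combination hl / 3

end Basilica

open Basilica in
/-- On each interval of linearity, an element of `T_B` is given by `θ ↦ 2ʲ·θ + d (mod 1)`
for some integer `j` and dyadic rational `d = m/2^p`. -/
theorem TB_segments_dyadic (f : Equiv.Perm Circle1) (hf : MemTB f)
    (F : ℝ → ℝ) (hF : IsPLLift F) (hind : InducedBy f F)
    (u v : ℝ) (huv : u < v) (haff : AffineOn F u v) :
    ∃ (j m p : ℤ), ∀ x ∈ Set.Icc u v, F x = (2 : ℝ) ^ j * x + (m : ℝ) / 2 ^ p := by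
  obtain ⟨a, b, hab⟩ := haff
  have ha : 0 < a := by
    have := hF.2.1 huv
    rw [hab u ⟨le_rfl, huv.le⟩, hab v ⟨huv.le, le_rfl⟩] at this
    nlinarith
  obtain ⟨n, k, hn, hul, hrv⟩ := exists_arc_subset_Icc huv (2 * a + 1)
  have hlr : arcLeft k n < arcRight k n := by
    linarith [arcRight_sub_arcLeft k n, show (0 : ℝ) < 2 / (3 * 2 ^ n) by positivity]
  have hFl := hab _ ⟨hul, hlr.le.trans hrv⟩
  have hFr := hab _ ⟨hul.trans hlr.le, hrv⟩
  have harc : IsArc (F (arcLeft k n)) (F (arcRight k n)) := by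
    rw [← hind, ← hind]
    exact (hf.2.1 _ _).mp (isArc_arcLeft_arcRight k n)
  have hshort : F (arcRight k n) - F (arcLeft k n) = a * (2 / (3 * 2 ^ n)) := by
    rw [hFl, hFr, ← arcRight_sub_arcLeft]; ring
  have hshort_lt : a * (2 / (3 * 2 ^ n)) < 1 / 3 := by
    rw [mul_div_assoc', div_lt_div_iff₀ (by positivity) (by norm_num)]
    linarith
  obtain ⟨k', m, L, hl, hr⟩ := harc.exists_lift (hF.2.1 hlr) (by linarith)
  obtain ⟨hslope, hoffset⟩ := affine_eq_of_mapsTo_arc (hFl ▸ hl) (hFr ▸ hr)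
  exact ⟨_, _, _, fun x hx => by rw [hab x hx, hslope, hoffset]⟩
end
end

section
/- Every element of T_B belongs to the group T(3): for every f ∈ T_B, every slope of f is an integer power of 2, and every breakpoint of f and its image under f are points of S^1 of the form k/(3·2^n) mod 1 with k, n ∈ ℤ, n ≥ 0. -/
noncomputable section

open Set

/-- A point of the circle of the form `k/(3·2ⁿ) mod 1` with `k ∈ ℤ`, `n ≥ 0`. -/
def IsTriadicPoint (p : Circle1) : Prop :=
  ∃ (k : ℤ) (n : ℕ), p = (((k : ℝ) / (3 * 2 ^ n) : ℝ) : Circle1)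

lemma circle_eq_iff' (x y : ℝ) : (x : Circle1) = (y : Circle1) ↔ ∃ z : ℤ, y = x + z := by
  rw [eq_comm, show (y : Circle1) = (x : Circle1) ↔ ((y - x : ℝ) : Circle1) = 0 by
    rw [AddCircle.coe_sub, sub_eq_zero], AddCircle.coe_eq_zero_iff]
  constructor
  · rintro ⟨z, hz⟩
    refine ⟨z, ?_⟩
    rw [zsmul_eq_mul, mul_one] at hz
    linarith
  · rintro ⟨z, rfl⟩; exact ⟨z, by rw [zsmul_eq_mul, mul_one]; ring⟩

lemma int_zero_of' (z : ℤ) (h1 : -1 < (z:ℝ)) (h2 : (z:ℝ) < 1) : z = 0 := by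
  have a : -1 < z := by exact_mod_cast h1
  have b : z < 1 := by exact_mod_cast h2
  omega

lemma slope_pow2' (f : Equiv.Perm Circle1) (hpres : PreservesLamination f)
    (F : ℝ → ℝ) (hmono : StrictMono F) (hind : InducedBy f F)
    {x s : ℝ} (hs : HasRightSlope F x s) : ∃ j : ℤ, s = (2 : ℝ) ^ j := by
  obtain ⟨ε, hε, hsl⟩ := hs
  have hspos : 0 < s := by
    have h1 := hsl (x + ε) ⟨by linarith, le_rfl⟩
    have h2 : F x < F (x + ε) := hmono (by linarith)
    nlinarith
  obtain ⟨n, hn⟩ := pow_unbounded_of_one_lt (max (3 / ε) (2 * s)) one_lt_two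
  set N : ℝ := (2:ℝ) ^ n with hNdef
  have hN0 : (0:ℝ) < N := by positivity
  have hNε : 3 / ε < N := lt_of_le_of_lt (le_max_left _ _) hn
  have hNs : 2 * s < N := lt_of_le_of_lt (le_max_right _ _) hn
  have hεN : 3 < ε * N := by
    rw [div_lt_iff₀ hε] at hNε; linarith
  set k : ℤ := ⌈N * x⌉ + 1 with hkdef
  set a : ℝ := (3 * (k : ℝ) - 1) / (3 * 2 ^ n) with hadef
  set b : ℝ := (3 * (k : ℝ) + 1) / (3 * 2 ^ n) with hbdef
  have hceil1 : N * x ≤ (⌈N * x⌉ : ℝ) := Int.le_ceil _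
  have hceil2 : (⌈N * x⌉ : ℝ) < N * x + 1 := Int.ceil_lt_add_one _
  have hk : (k : ℝ) = (⌈N * x⌉ : ℝ) + 1 := by rw [hkdef]; push_cast; ring
  have hxa : x ≤ a := by
    rw [hadef, le_div_iff₀ (by positivity)]
    rw [hk]; nlinarith
  have hab : a < b := by
    rw [hadef, hbdef, div_lt_div_iff₀ (by positivity) (by positivity)]
    nlinarith
  have hbx : b ≤ x + ε := by
    rw [hbdef, div_le_iff₀ (by positivity)]
    rw [hk]; nlinarith
  have hFa := hsl a ⟨hxa, le_trans hab.le hbx⟩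
  have hFb := hsl b ⟨le_trans hxa hab.le, hbx⟩
  have hba : b - a = 2 / (3 * N) := by
    rw [hadef, hbdef]; field_simp; ring
  set d : ℝ := F b - F a with hddef
  have hd : d = s * (2 / (3 * N)) := by
    rw [hddef, hFa, hFb, ← hba]; ring
  have hd0 : 0 < d := by rw [hd]; positivity
  have hd13 : d < 1 / 3 := by
    rw [hd]
    rw [mul_div_assoc'] at *
    rw [div_lt_div_iff₀ (by positivity) (by norm_num)]
    nlinarith
  have harc : IsArc (a : Circle1) (b : Circle1) := ⟨k, n, rfl⟩
  have himg := (hpres _ _).mp harc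
  rw [hind a, hind b] at himg
  obtain ⟨k', m, hset⟩ := himg
  set L : ℝ := (3 * (k' : ℝ) - 1) / (3 * 2 ^ m) with hLdef
  set R : ℝ := (3 * (k' : ℝ) + 1) / (3 * 2 ^ m) with hRdef
  have hM0 : (0:ℝ) < (2:ℝ) ^ m := by positivity
  have hM1 : (1:ℝ) ≤ (2:ℝ) ^ m := one_le_pow₀ (by norm_num : (1:ℝ) ≤ 2)
  set w : ℝ := 2 / (3 * 2 ^ m) with hwdef
  have hw0 : 0 < w := by positivity
  have hw23 : w ≤ 2 / 3 := by
    rw [hwdef, div_le_div_iff₀ (by positivity) (by norm_num)]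
    nlinarith
  have hRL : R - L = w := by rw [hRdef, hLdef, hwdef]; field_simp; ring
  have hA : (↑(F a) : Circle1) = ↑L ∨ (↑(F a) : Circle1) = ↑R := by
    have : (↑(F a) : Circle1) ∈ ({(↑L : Circle1), ↑R} : Set Circle1) := by
      rw [← hset]; exact Set.mem_insert _ _
    simpa using this
  have hB : (↑(F b) : Circle1) = ↑L ∨ (↑(F b) : Circle1) = ↑R := by
    have : (↑(F b) : Circle1) ∈ ({(↑L : Circle1), ↑R} : Set Circle1) := by
      rw [← hset]; exact Set.mem_insert_of_mem _ rfl
    simpa using this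
  have hne : (↑(F a) : Circle1) ≠ ↑(F b) := by
    rw [Ne, circle_eq_iff']
    rintro ⟨z, hz⟩
    have hzd : (z : ℝ) = d := by rw [hddef]; linarith
    have := int_zero_of' z (by rw [hzd]; linarith) (by rw [hzd]; linarith)
    rw [this] at hzd; simp at hzd; linarith
  have key : d = w := by
    rcases hA with hA | hA <;> rcases hB with hB | hB
    · exact absurd (hA.trans hB.symm) hne
    · obtain ⟨z1, hz1⟩ := (circle_eq_iff' _ _).mp hA
      obtain ⟨z2, hz2⟩ := (circle_eq_iff' _ _).mp hB
      have hz : ((z1 - z2 : ℤ) : ℝ) = d - w := by push_cast; rw [hddef]; linarith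
      have := int_zero_of' (z1 - z2) (by rw [hz]; linarith) (by rw [hz]; linarith)
      rw [this] at hz; simp at hz; linarith
    · obtain ⟨z1, hz1⟩ := (circle_eq_iff' _ _).mp hA
      obtain ⟨z2, hz2⟩ := (circle_eq_iff' _ _).mp hB
      have hz : ((z1 - z2 : ℤ) : ℝ) = d + w := by push_cast; rw [hddef]; linarith
      have := int_zero_of' (z1 - z2) (by rw [hz]; linarith) (by rw [hz]; linarith)
      rw [this] at hz; simp at hz; linarith
    · exact absurd (hA.trans hB.symm) hne
  refine ⟨(n : ℤ) - (m : ℤ), ?_⟩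
  have hs2 : s * (2 / (3 * N)) = 2 / (3 * 2 ^ m) := by rw [← hd, key, hwdef]
  have hs2' : (2 * s) / (3 * N) = 2 / (3 * 2 ^ m) := by rw [← hs2]; ring
  have hcross := (div_eq_div_iff (by positivity) (by positivity)).mp hs2'
  have : s = N / 2 ^ m := by
    rw [eq_div_iff (ne_of_gt hM0)]
    linear_combination hcross / 6
  rw [this, hNdef, zpow_sub₀ (by norm_num : (2:ℝ) ≠ 0), zpow_natCast, zpow_natCast]

lemma endpoint_triadic' (p : Circle1) (h : IsArcEndpoint p) : IsTriadicPoint p := by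
  obtain ⟨k, n, h | h⟩ := h
  · exact ⟨3 * k - 1, n, by rw [h]; push_cast; ring_nf⟩
  · exact ⟨3 * k + 1, n, by rw [h]; push_cast; ring_nf⟩

lemma image_endpoint_triadic' (f : Equiv.Perm Circle1) (hpres : PreservesLamination f)
    (p : Circle1) (h : IsArcEndpoint p) : IsTriadicPoint (f p) := by
  obtain ⟨k, n, h | h⟩ := h
  case _ =>
    have harc : IsArc p ((((3 * (k : ℝ) + 1) / (3 * 2 ^ n) : ℝ) : Circle1)) :=
      ⟨k, n, by rw [h]⟩
    have himg := (hpres _ _).mp harc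
    obtain ⟨k', m, hset⟩ := himg
    have hmem : f p ∈ ({(((3 * (k' : ℝ) - 1) / (3 * 2 ^ m) : ℝ) : Circle1),
        (((3 * (k' : ℝ) + 1) / (3 * 2 ^ m) : ℝ) : Circle1)} : Set Circle1) := by
      rw [← hset]; exact Set.mem_insert _ _
    rcases hmem with hm | hm
    · exact ⟨3 * k' - 1, m, by rw [hm]; push_cast; ring_nf⟩
    · exact ⟨3 * k' + 1, m, by rw [hm]; push_cast; ring_nf⟩
  case _ =>
    have harc : IsArc p ((((3 * (k : ℝ) - 1) / (3 * 2 ^ n) : ℝ) : Circle1)) :=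
      ⟨k, n, by rw [h]; exact Set.pair_comm _ _⟩
    have himg := (hpres _ _).mp harc
    obtain ⟨k', m, hset⟩ := himg
    have hmem : f p ∈ ({(((3 * (k' : ℝ) - 1) / (3 * 2 ^ m) : ℝ) : Circle1),
        (((3 * (k' : ℝ) + 1) / (3 * 2 ^ m) : ℝ) : Circle1)} : Set Circle1) := by
      rw [← hset]; exact Set.mem_insert _ _
    rcases hmem with hm | hm
    · exact ⟨3 * k' - 1, m, by rw [hm]; push_cast; ring_nf⟩
    · exact ⟨3 * k' + 1, m, by rw [hm]; push_cast; ring_nf⟩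

/-- Every element of `T_B` belongs to `T(3)`: its slopes are integer powers of 2, and its
breakpoints and their images have the form `k/(3·2ⁿ) mod 1`. -/
theorem TB_subset_T3 (f : Equiv.Perm Circle1) (hf : MemTB f) :
    (∀ s : ℝ, IsSlope f s → ∃ j : ℤ, s = (2 : ℝ) ^ j) ∧
    (∀ p : Circle1, IsBreakpoint f p → IsTriadicPoint p ∧ IsTriadicPoint (f p)) := by
  obtain ⟨hpl, hpres, hbk⟩ := hf
  constructor
  · rintro s ⟨F, x, hFlift, hind, hrs⟩
    exact slope_pow2' f hpres F hFlift.2.1 hind hrs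
  · intro p hp
    have hend := hbk p hp
    refine ⟨endpoint_triadic' p hend, image_endpoint_triadic' f hpres p hend⟩
end
end
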